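/- arXiv:2503.12027 — 3 statements merged into one kernel-verified Lean document; each statement's English description precedes it below -/
import Mathlib

section
/- For all positive integers s, k and n, the series ∑_{q=1}^∞ μ(q) c_q^s(n^s) / J_{s+k}(q) converges and equals ζ(s+k) · J_k(n)/n^k, where μ is the Möbius function and ζ is the Riemann zeta function. -/
open Finset Filter

/-- The generalized GCD `(m, n)_s`: the largest positive integer of the form `l ^ s`
dividing both `m` and `n`. -/
noncomputable def genGcd (s m n : ℕ) : ℕ :=
  letI := Classical.dec
  ((Nat.gcd m n).divisors.filter fun d => ∃ l : ℕ, l ^ s = d).sup id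

/-- The Cohen–Ramanujan sum `c_r^s(n) = ∑_{h=1, (h, r^s)_s = 1}^{r^s} e^{2πinh/r^s}`. -/
noncomputable def cohenRamanujanSum (s r n : ℕ) : ℂ :=
  ∑ h ∈ Finset.Icc 1 (r ^ s),
    if genGcd s h (r ^ s) = 1 then
      Complex.exp (2 * Real.pi * Complex.I * n * h / (r ^ s)) else 0

/-- The Jordan totient function `J_a(n) = n^a ∏_{p ∣ n, p prime} (1 - 1/p^a)`,
with arbitrary real exponent `a`. -/
noncomputable def jordanTotient (a : ℝ) (n : ℕ) : ℝ :=
  (n : ℝ) ^ a * ∏ p ∈ n.primeFactors, (1 - 1 / (p : ℝ) ^ a)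

/-- `tauPow k n` is the number of positive integers of the form `l ^ k` dividing `n`. -/
noncomputable def tauPow (k n : ℕ) : ℕ :=
  letI := Classical.dec
  (n.divisors.filter fun d => ∃ l : ℕ, l ^ k = d).card

/-- The Riemann zeta function of a real argument `s > 1`, as `∑_{n ≥ 1} 1/n^s`. -/
noncomputable def realZeta (s : ℝ) : ℝ := ∑' n : ℕ, 1 / (n : ℝ) ^ s

/-! Writing the condition `(h, q^s)_s = 1` as `∑_{d ∣ q, d^s ∣ h} μ(d)` and summing the
resulting geometric series over `h` gives `c_q^s(m) = ∑_{de = q} μ(d) [e^s ∣ m] e^s`. For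
`m = n^s` this is the Dirichlet convolution of `μ` with `e ↦ [e ∣ n] e^s`, so it is
multiplicative in `q`, bounded by `σ_s(n)`, and `c_p^s(n^s) = [p ∣ n] p^s - 1`. Hence the
summand `μ(q) c_q^s(n^s) / J_{s+k}(q)` is multiplicative, supported on squarefree `q`, and
`O(q^{-2})` since `J_{s+k}(q) ≥ q^2/2`. Its Euler factor `1 + μ(p) c_p^s(n^s) / (p^{s+k} - 1)` is
`(1 - p^{-(s+k)})^{-1}` times `1 - p^{-k}` or `1` according as `p ∣ n` or not, so the series
equals `ζ(s+k) ∏_{p ∣ n} (1 - p^{-k})`.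
-/

open ArithmeticFunction
open scoped ArithmeticFunction.Moebius ArithmeticFunction.sigma

theorem Nat.lcm_pow_dvd {a b h s : ℕ} (hh : h ≠ 0) (ha : a ^ s ∣ h) (hb : b ^ s ∣ h) :
    Nat.lcm a b ^ s ∣ h := by
  rcases Nat.eq_zero_or_pos s with rfl | hs
  · simp
  have ha0 : a ≠ 0 := by rintro rfl; simp [zero_pow hs.ne', hh] at ha
  have hb0 : b ≠ 0 := by rintro rfl; simp [zero_pow hs.ne', hh] at hb
  rw [← Nat.factorization_le_iff_dvd (by positivity) hh] at ha hb ⊢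
  intro p
  simpa [Nat.factorization_lcm ha0 hb0, ← Nat.mul_max_mul_left] using And.intro (ha p) (hb p)

theorem Finset.lcm_pow_dvd {ι : Type*} {t : Finset ι} {f : ι → ℕ} {h s : ℕ} (hh : h ≠ 0)
    (ht : ∀ i ∈ t, f i ^ s ∣ h) : t.lcm f ^ s ∣ h := by
  classical
  induction t using Finset.induction_on with
  | empty => simp
  | insert i t hi ih =>
    rw [Finset.lcm_insert]
    exact Nat.lcm_pow_dvd hh (ht i (by simp)) (ih fun j hj => ht j (by simp [hj]))

theorem Nat.exists_forall_dvd_iff_pow_dvd {s G : ℕ} (hs : s ≠ 0) (hG : G ≠ 0) :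
    ∃ g, ∀ d, d ∣ g ↔ d ^ s ∣ G := by
  refine ⟨(G.divisors.filter fun d => d ^ s ∣ G).lcm id, fun d =>
    ⟨fun hd => ?_, fun hd => ?_⟩⟩
  · exact (pow_dvd_pow_of_dvd hd s).trans (Finset.lcm_pow_dvd hG fun i hi => (mem_filter.1 hi).2)
  · refine dvd_lcm (mem_filter.2 ⟨Nat.mem_divisors.2 ⟨?_, hG⟩, hd⟩)
    exact (dvd_pow_self d hs).trans hd

theorem genGcd_eq_pow {s m n g : ℕ} (hmn : Nat.gcd m n ≠ 0)
    (hg : ∀ d, d ∣ g ↔ d ^ s ∣ Nat.gcd m n) : genGcd s m n = g ^ s := by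
  unfold genGcd
  -- trade the `Classical.dec` instance of the definition for the one `mem_filter` expects
  rw [Finset.filter_congr_decidable]
  have hgs : g ^ s ≠ 0 := ne_zero_of_dvd_ne_zero hmn ((hg g).1 dvd_rfl)
  refine le_antisymm (Finset.sup_le fun d hd => ?_) (Finset.le_sup (f := id) ?_)
  · obtain ⟨hd, l, rfl⟩ := mem_filter.1 hd
    exact Nat.le_of_dvd (Nat.pos_of_ne_zero hgs)
      (pow_dvd_pow_of_dvd ((hg l).2 (Nat.dvd_of_mem_divisors hd)) s)
  · exact mem_filter.2 ⟨Nat.mem_divisors.2 ⟨(hg g).1 dvd_rfl, hmn⟩, g, rfl⟩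

theorem sum_moebius_filter_pow_dvd {R : Type*} [Ring R] {s q h : ℕ} (hs : s ≠ 0) (hq : q ≠ 0)
    (hh : h ≠ 0) :
    ∑ d ∈ q.divisors with d ^ s ∣ h, (μ d : R) =
      if genGcd s h (q ^ s) = 1 then 1 else 0 := by
  have hG : Nat.gcd h (q ^ s) ≠ 0 := Nat.gcd_ne_zero_left hh
  obtain ⟨g, hg⟩ := Nat.exists_forall_dvd_iff_pow_dvd hs hG
  have hg0 : g ≠ 0 := (pow_ne_zero_iff hs).1 (ne_zero_of_dvd_ne_zero hG ((hg g).1 dvd_rfl))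
  have hdiv : (q.divisors.filter fun d => d ^ s ∣ h) = g.divisors := by
    ext d
    simp [hg, Nat.dvd_gcd_iff, Nat.pow_dvd_pow_iff hs, hq, hg0, and_comm]
  have hmoeb := congrArg (· g) (coe_moebius_mul_coe_zeta (R := R))
  simp only [coe_mul_zeta_apply, intCoe_apply, one_apply] at hmoeb
  rw [hdiv, hmoeb, genGcd_eq_pow hG hg]
  simp [pow_eq_one_iff, hs]

theorem sum_Icc_pow_eq_ite {K : Type*} [Field K] [DecidableEq K] {x : K} {Q : ℕ}
    (hx : x ^ Q = 1) : ∑ h ∈ Icc 1 Q, x ^ h = if x = 1 then (Q : K) else 0 := by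
  split_ifs with h1
  · simp [h1]
  · rw [← Ico_add_one_right_eq_Icc, sum_Ico_eq_sum_range, Nat.add_sub_cancel]
    simp only [pow_add, pow_one, ← mul_sum, geom_sum_eq h1, hx, sub_self, zero_div, mul_zero]

theorem sum_Icc_exp_eq_ite (m : ℕ) {Q : ℕ} (hQ : Q ≠ 0) :
    ∑ h ∈ Icc 1 Q, Complex.exp (2 * Real.pi * Complex.I * m * h / Q) =
      if Q ∣ m then (Q : ℂ) else 0 := by
  have hζ := Complex.isPrimitiveRoot_exp Q hQ
  have hpow : ∀ h : ℕ, Complex.exp (2 * Real.pi * Complex.I * m * h / Q) =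
      (Complex.exp (2 * Real.pi * Complex.I / Q) ^ m) ^ h := fun h => by
    rw [← pow_mul, ← Complex.exp_nat_mul]
    congr 1
    push_cast
    ring
  have hroot : (Complex.exp (2 * Real.pi * Complex.I / Q) ^ m) ^ Q = 1 := by
    rw [pow_right_comm, hζ.pow_eq_one, one_pow]
  rw [sum_congr rfl fun h _ => hpow h, sum_Icc_pow_eq_ite hroot]
  simp only [hζ.pow_eq_one_iff_dvd]

theorem Finset.sum_Icc_filter_dvd {M : Type*} [AddCommMonoid M] (f : ℕ → M) {D : ℕ}
    (hD : D ≠ 0) (Q : ℕ) :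
    ∑ h ∈ Icc 1 (D * Q) with D ∣ h, f h = ∑ j ∈ Icc 1 Q, f (D * j) := by
  have himage : (Icc 1 (D * Q)).filter (D ∣ ·) = (Icc 1 Q).image (D * ·) := by
    ext h
    simp only [mem_filter, mem_Icc, mem_image]
    constructor
    · rintro ⟨⟨h1, h2⟩, j, rfl⟩
      refine ⟨j, ⟨Nat.pos_of_ne_zero (by rintro rfl; simp at h1), ?_⟩, rfl⟩
      exact Nat.le_of_mul_le_mul_left h2 (Nat.pos_of_ne_zero hD)
    · rintro ⟨j, ⟨h1, h2⟩, rfl⟩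
      exact ⟨⟨Nat.one_le_iff_ne_zero.2 (mul_ne_zero hD (by omega)), Nat.mul_le_mul_left D h2⟩,
        dvd_mul_right D j⟩
  rw [himage, sum_image fun i _ j _ hij => Nat.eq_of_mul_eq_mul_left (Nat.pos_of_ne_zero hD) hij]

theorem cohenRamanujanSum_eq_sum_divisorsAntidiagonal {s : ℕ} (hs : s ≠ 0) (q m : ℕ) :
    cohenRamanujanSum s q m =
      ∑ x ∈ q.divisorsAntidiagonal,
        (μ x.1 : ℂ) * if x.2 ^ s ∣ m then (x.2 : ℂ) ^ s else 0 := by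
  rcases eq_or_ne q 0 with rfl | hq
  · simp [cohenRamanujanSum, zero_pow hs]
  set e : ℕ → ℂ := fun h => Complex.exp (2 * Real.pi * Complex.I * m * h / (q : ℂ) ^ s)
  have hsieve : ∀ h ∈ Icc 1 (q ^ s), (if genGcd s h (q ^ s) = 1 then e h else 0) =
      ∑ d ∈ q.divisors, if d ^ s ∣ h then (μ d : ℂ) * e h else 0 := fun h hh => by
    rw [← sum_filter, ← sum_mul,
      sum_moebius_filter_pow_dvd hs hq (by have := (mem_Icc.1 hh).1; omega)]
    split_ifs <;> simp
  rw [cohenRamanujanSum, sum_congr rfl hsieve, sum_comm,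
    ← Nat.sum_divisorsAntidiagonal fun d _ => ∑ h ∈ Icc 1 (q ^ s),
      if d ^ s ∣ h then (μ d : ℂ) * e h else 0]
  refine sum_congr rfl fun x hx => ?_
  obtain ⟨hxq, -⟩ := Nat.mem_divisorsAntidiagonal.1 hx
  have hx1 : x.1 ≠ 0 := left_ne_zero_of_mul (hxq ▸ hq)
  have hx2 : x.2 ^ s ≠ 0 := pow_ne_zero s (right_ne_zero_of_mul (hxq ▸ hq))
  rw [← sum_filter, ← mul_sum, ← hxq, mul_pow,
    Finset.sum_Icc_filter_dvd _ (pow_ne_zero s hx1), ← Nat.cast_pow, ← sum_Icc_exp_eq_ite m hx2]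
  congr 1
  refine sum_congr rfl fun j _ => congrArg Complex.exp ?_
  have : (x.1 : ℂ) ^ s ≠ 0 := by exact_mod_cast pow_ne_zero s hx1
  have : (x.2 : ℂ) ^ s ≠ 0 := by exact_mod_cast hx2
  rw [← hxq]
  push_cast
  rw [mul_pow]
  field_simp

noncomputable def divisorsPow (s n : ℕ) : ArithmeticFunction ℂ :=
  ⟨fun d => if d ∈ n.divisors then (d : ℂ) ^ s else 0, by simp⟩

theorem divisorsPow_apply (s n d : ℕ) :
    divisorsPow s n d = if d ∈ n.divisors then (d : ℂ) ^ s else 0 := rfl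

theorem isMultiplicative_divisorsPow (s : ℕ) {n : ℕ} (hn : n ≠ 0) :
    (divisorsPow s n).IsMultiplicative := by
  refine IsMultiplicative.iff_ne_zero.2
    ⟨by simp [divisorsPow_apply, hn], fun {a b} _ _ hab => ?_⟩
  have hdvd : a * b ∣ n ↔ a ∣ n ∧ b ∣ n :=
    ⟨fun h => ⟨(dvd_mul_right a b).trans h, (dvd_mul_left b a).trans h⟩,
      fun h => hab.mul_dvd_of_dvd_of_dvd h.1 h.2⟩
  simp only [divisorsPow_apply, Nat.mem_divisors, hdvd, Nat.cast_mul, mul_pow]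
  split_ifs <;> simp_all

theorem cohenRamanujanSum_pow_eq_mul_apply {s n : ℕ} (hs : s ≠ 0) (hn : n ≠ 0) (q : ℕ) :
    cohenRamanujanSum s q (n ^ s) = ((μ : ArithmeticFunction ℂ) * divisorsPow s n) q := by
  rw [cohenRamanujanSum_eq_sum_divisorsAntidiagonal hs, mul_apply]
  simp [divisorsPow_apply, Nat.pow_dvd_pow_iff hs, hn]

theorem isMultiplicative_moebius_mul_divisorsPow (s : ℕ) {n : ℕ} (hn : n ≠ 0) :
    ((μ : ArithmeticFunction ℂ) * divisorsPow s n).IsMultiplicative :=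
  isMultiplicative_moebius.intCast.mul (isMultiplicative_divisorsPow s hn)

theorem norm_moebius_le_one (d : ℕ) : ‖(μ d : ℂ)‖ ≤ 1 := by
  rw [Complex.norm_intCast]
  exact_mod_cast abs_moebius_le_one

theorem norm_cohenRamanujanSum_pow_le {s n : ℕ} (hs : s ≠ 0) (hn : n ≠ 0) (q : ℕ) :
    ‖cohenRamanujanSum s q (n ^ s)‖ ≤ σ s n := by
  rw [cohenRamanujanSum_pow_eq_mul_apply hs hn, mul_apply]
  calc ‖∑ x ∈ q.divisorsAntidiagonal, (μ x.1 : ℂ) * divisorsPow s n x.2‖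
      ≤ ∑ x ∈ q.divisorsAntidiagonal, ‖divisorsPow s n x.2‖ := by
        refine (norm_sum_le _ _).trans (sum_le_sum fun x _ => ?_)
        rw [norm_mul]
        exact mul_le_of_le_one_left (norm_nonneg _) (norm_moebius_le_one x.1)
    _ = ∑ d ∈ q.divisors ∩ n.divisors, (d : ℝ) ^ s := by
        rw [Nat.sum_divisorsAntidiagonal' fun _ d => ‖divisorsPow s n d‖, ← sum_ite_mem]
        simp [divisorsPow_apply, apply_ite]
    _ ≤ σ s n := by
        rw [sigma_apply, Nat.cast_sum]
        push_cast
        exact sum_le_sum_of_subset_of_nonneg inter_subset_right (by intros; positivity)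

theorem cohenRamanujanSum_prime {s p : ℕ} (hs : s ≠ 0) (hp : p.Prime) (n : ℕ) :
    cohenRamanujanSum s p (n ^ s) = (if p ∣ n then (p : ℂ) ^ s else 0) - 1 := by
  rw [cohenRamanujanSum_eq_sum_divisorsAntidiagonal hs, Nat.sum_divisorsAntidiagonal
    fun a b => (μ a : ℂ) * if b ^ s ∣ n ^ s then (b : ℂ) ^ s else 0, hp.divisors,
    sum_pair hp.one_lt.ne, Nat.div_one, Nat.div_self hp.pos, moebius_apply_one,
    moebius_apply_prime hp]
  simp only [Nat.pow_dvd_pow_iff hs, one_pow, one_dvd, if_true, Int.cast_one, Int.cast_neg,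
    one_mul, neg_one_mul, ← sub_eq_add_neg, Nat.cast_one]

theorem jordanTotient_one (a : ℝ) : jordanTotient a 1 = 1 := by
  simp [jordanTotient]

theorem jordanTotient_mul {m n : ℕ} (hmn : m.Coprime n) (a : ℝ) :
    jordanTotient a (m * n) = jordanTotient a m * jordanTotient a n := by
  simp only [jordanTotient, Nat.cast_mul, Real.mul_rpow (Nat.cast_nonneg m) (Nat.cast_nonneg n),
    hmn.primeFactors_mul, prod_union hmn.disjoint_primeFactors]
  ring

theorem jordanTotient_prime {p : ℕ} (hp : p.Prime) (a : ℝ) :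
    jordanTotient a p = (p : ℝ) ^ a - 1 := by
  have : (p : ℝ) ^ a ≠ 0 := (Real.rpow_pos_of_pos (by exact_mod_cast hp.pos) a).ne'
  rw [jordanTotient, hp.primeFactors, prod_singleton]
  field_simp

theorem jordanTotient_div_rpow_self (a : ℝ) {n : ℕ} (hn : n ≠ 0) :
    jordanTotient a n / (n : ℝ) ^ a = ∏ p ∈ n.primeFactors, (1 - 1 / (p : ℝ) ^ a) := by
  have : (n : ℝ) ^ a ≠ 0 :=
    (Real.rpow_pos_of_pos (by exact_mod_cast Nat.pos_of_ne_zero hn) a).ne'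
  rw [jordanTotient, mul_div_cancel_left₀ _ this]

theorem prod_Icc_two_one_sub_inv_sq {n : ℕ} (hn : n ≠ 0) :
    ∏ j ∈ Icc 2 n, (1 - 1 / (j : ℝ) ^ 2) = ((n : ℝ) + 1) / (2 * n) := by
  induction n with
  | zero => contradiction
  | succ n ih =>
    rcases eq_or_ne n 0 with rfl | hn0
    · norm_num
    rw [prod_Icc_succ_top (by omega), ih hn0]
    have : (n : ℝ) ≠ 0 := by exact_mod_cast hn0
    push_cast
    field_simp
    ring

theorem one_sub_one_div_rpow_nonneg {p : ℕ} (hp : p ≠ 0) {a : ℝ} (ha : 0 ≤ a) :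
    0 ≤ 1 - 1 / (p : ℝ) ^ a := by
  rw [sub_nonneg, div_le_one (by positivity)]
  exact Real.one_le_rpow (by exact_mod_cast Nat.one_le_iff_ne_zero.2 hp) ha

theorem half_le_prod_primeFactors_one_sub_inv_rpow {a : ℝ} (ha : 2 ≤ a) (n : ℕ) :
    1 / 2 ≤ ∏ p ∈ n.primeFactors, (1 - 1 / (p : ℝ) ^ a) := by
  rcases eq_or_ne n 0 with rfl | hn
  · norm_num
  have hsub : n.primeFactors ⊆ Icc 2 n := fun p hp =>
    mem_Icc.2 ⟨(Nat.prime_of_mem_primeFactors hp).two_le, Nat.le_of_mem_primeFactors hp⟩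
  calc (1 : ℝ) / 2 ≤ (n + 1) / (2 * n) := by
        rw [div_le_div_iff₀ (by norm_num) (by positivity)]
        linarith
    _ = ∏ j ∈ Icc 2 n, (1 - 1 / (j : ℝ) ^ (2 : ℝ)) := by
        simp only [Real.rpow_two, prod_Icc_two_one_sub_inv_sq hn]
    _ ≤ ∏ p ∈ n.primeFactors, (1 - 1 / (p : ℝ) ^ (2 : ℝ)) :=
        prod_le_prod_of_subset_of_le_one hsub
          (fun j hj => one_sub_one_div_rpow_nonneg (by have := (mem_Icc.1 hj).1; omega)
            zero_le_two)
          (fun j _ _ => by simp only [sub_le_self_iff]; positivity)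
    _ ≤ ∏ p ∈ n.primeFactors, (1 - 1 / (p : ℝ) ^ a) := by
        refine prod_le_prod (fun p hp => one_sub_one_div_rpow_nonneg
          (Nat.prime_of_mem_primeFactors hp).ne_zero zero_le_two) fun p hp => ?_
        have hp1 : (1 : ℝ) ≤ p := by exact_mod_cast (Nat.prime_of_mem_primeFactors hp).one_le
        gcongr

theorem sq_div_two_le_jordanTotient {a : ℝ} (ha : 2 ≤ a) (n : ℕ) :
    (n : ℝ) ^ 2 / 2 ≤ jordanTotient a n := by
  rcases eq_or_ne n 0 with rfl | hn
  · simp [jordanTotient, Real.zero_rpow (by linarith : a ≠ 0)]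
  have hn1 : (1 : ℝ) ≤ n := by exact_mod_cast Nat.one_le_iff_ne_zero.2 hn
  calc (n : ℝ) ^ 2 / 2 = (n : ℝ) ^ (2 : ℝ) * (1 / 2) := by rw [Real.rpow_two]; ring
    _ ≤ jordanTotient a n :=
        mul_le_mul (Real.rpow_le_rpow_of_exponent_le hn1 ha)
          (half_le_prod_primeFactors_one_sub_inv_rpow ha n) (by norm_num) (by positivity)

theorem HasSum.tendsto_sum_Icc_one {M : Type*} [AddCommMonoid M] [TopologicalSpace M]
    {f : ℕ → M} {a : M} (hf : HasSum f a) (h0 : f 0 = 0) :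
    Tendsto (fun N => ∑ i ∈ Icc 1 N, f i) atTop (nhds a) := by
  refine (hf.tendsto_sum_nat.comp (tendsto_add_atTop_nat 1)).congr fun N => ?_
  rw [Function.comp_apply, range_eq_Ico, sum_eq_sum_Ico_succ_bot (by omega), h0,
    _root_.zero_add, Ico_add_one_right_eq_Icc]

theorem hasProd_one_add_of_apply_prime_pow_eq_zero {R : Type*} [NormedCommRing R]
    [CompleteSpace R] {f : ℕ → R} (hf₁ : f 1 = 1)
    (hmul : ∀ {m n : ℕ}, m.Coprime n → f (m * n) = f m * f n)
    (hsum : Summable (‖f ·‖)) (hf₀ : f 0 = 0)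
    (hsq : ∀ {p e : ℕ}, p.Prime → 2 ≤ e → f (p ^ e) = 0) :
    HasProd (fun p : Nat.Primes => 1 + f p) (∑' n, f n) := by
  convert EulerProduct.eulerProduct_hasProd hf₁ hmul hsum hf₀ using 2 with p
  rw [tsum_eq_sum (s := range 2) fun e he => hsq p.prop (by simp at he; omega)]
  simp [sum_range_succ, hf₁]

theorem hasProd_primes_ite_dvd {M : Type*} [CommMonoid M] [TopologicalSpace M] {n : ℕ}
    (hn : n ≠ 0) (f : ℕ → M) :
    HasProd (fun p : Nat.Primes => if (p : ℕ) ∣ n then f p else 1)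
      (∏ p ∈ n.primeFactors, f p) := by
  have h : HasProd (fun p : Nat.Primes => if (p : ℕ) ∣ n then f p else 1)
      (∏ p ∈ n.primeFactors.subtype Nat.Prime, if (p : ℕ) ∣ n then f p else 1) :=
    hasProd_prod_of_ne_finset_one fun p hp =>
      if_neg fun hpn => hp (mem_subtype.2 (Nat.mem_primeFactors.2 ⟨p.prop, hpn, hn⟩))
  rwa [prod_subtype_of_mem (fun p => if p ∣ n then f p else 1)
    (fun p hp => Nat.prime_of_mem_primeFactors hp),
    prod_congr rfl fun p hp => if_pos (Nat.dvd_of_mem_primeFactors hp)] at h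

noncomputable def cohenRamanujanJordanTerm (s k n q : ℕ) : ℂ :=
  (μ q : ℂ) * cohenRamanujanSum s q (n ^ s) /
    ((jordanTotient ((s : ℝ) + (k : ℝ)) q : ℝ) : ℂ)

section

variable {s k n : ℕ}

theorem cohenRamanujanJordanTerm_zero : cohenRamanujanJordanTerm s k n 0 = 0 := by
  simp [cohenRamanujanJordanTerm]

theorem cohenRamanujanJordanTerm_one (hs : s ≠ 0) (hn : n ≠ 0) :
    cohenRamanujanJordanTerm s k n 1 = 1 := by
  simp [cohenRamanujanJordanTerm, cohenRamanujanSum_pow_eq_mul_apply hs hn,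
    (isMultiplicative_moebius_mul_divisorsPow s hn).map_one, jordanTotient_one]

theorem cohenRamanujanJordanTerm_mul (hs : s ≠ 0) (hn : n ≠ 0) {a b : ℕ} (hab : a.Coprime b) :
    cohenRamanujanJordanTerm s k n (a * b) =
      cohenRamanujanJordanTerm s k n a * cohenRamanujanJordanTerm s k n b := by
  simp only [cohenRamanujanJordanTerm, cohenRamanujanSum_pow_eq_mul_apply hs hn,
    (isMultiplicative_moebius_mul_divisorsPow s hn).map_mul_of_coprime hab,
    isMultiplicative_moebius.map_mul_of_coprime hab, jordanTotient_mul hab]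
  push_cast
  ring

theorem cohenRamanujanJordanTerm_prime_pow {p e : ℕ} (hp : p.Prime) (he : 2 ≤ e) :
    cohenRamanujanJordanTerm s k n (p ^ e) = 0 := by
  rw [cohenRamanujanJordanTerm, moebius_apply_prime_pow hp (by omega), if_neg (by omega)]
  simp

theorem norm_cohenRamanujanJordanTerm_le (hs : s ≠ 0) (hk : k ≠ 0) (hn : n ≠ 0) (q : ℕ) :
    ‖cohenRamanujanJordanTerm s k n q‖ ≤ 2 * σ s n / (q : ℝ) ^ 2 := by
  rcases eq_or_ne q 0 with rfl | hq
  · simp [cohenRamanujanJordanTerm_zero]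
  have h2 : (2 : ℝ) ≤ s + k := by
    have : 1 ≤ (s : ℝ) := by exact_mod_cast Nat.one_le_iff_ne_zero.2 hs
    have : 1 ≤ (k : ℝ) := by exact_mod_cast Nat.one_le_iff_ne_zero.2 hk
    linarith
  have hJ := sq_div_two_le_jordanTotient h2 q
  rw [cohenRamanujanJordanTerm, norm_div, norm_mul, Complex.norm_real,
    Real.norm_of_nonneg (by linarith [show 0 < (q : ℝ) ^ 2 / 2 by positivity])]
  calc ‖(μ q : ℂ)‖ * ‖cohenRamanujanSum s q (n ^ s)‖ / jordanTotient (s + k) q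
      ≤ σ s n / ((q : ℝ) ^ 2 / 2) := by
        gcongr
        exact (mul_le_of_le_one_left (norm_nonneg _) (norm_moebius_le_one q)).trans
          (norm_cohenRamanujanSum_pow_le hs hn q)
    _ = 2 * σ s n / (q : ℝ) ^ 2 := by field_simp

theorem summable_norm_cohenRamanujanJordanTerm (hs : s ≠ 0) (hk : k ≠ 0) (hn : n ≠ 0) :
    Summable (‖cohenRamanujanJordanTerm s k n ·‖) := by
  refine .of_nonneg_of_le (fun _ => norm_nonneg _) (norm_cohenRamanujanJordanTerm_le hs hk hn) ?_
  exact ((Real.summable_one_div_nat_pow.2 one_lt_two).mul_left _).congr fun q => mul_one_div _ _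

theorem one_add_cohenRamanujanJordanTerm_prime (hs : s ≠ 0) {p : ℕ} (hp : p.Prime) :
    1 + cohenRamanujanJordanTerm s k n p =
      (1 - (p : ℂ) ^ (-((s : ℂ) + k)))⁻¹ * if p ∣ n then 1 - 1 / (p : ℂ) ^ k else 1 := by
  have hp0 : (p : ℂ) ≠ 0 := by exact_mod_cast hp.ne_zero
  have hp1 : (p : ℂ) ^ (s + k) ≠ 1 := by
    exact_mod_cast (Nat.one_lt_pow (by omega) hp.one_lt).ne'
  have hJ : ((jordanTotient ((s : ℝ) + k) p : ℝ) : ℂ) = (p : ℂ) ^ (s + k) - 1 := by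
    rw [jordanTotient_prime hp, ← Nat.cast_add, Real.rpow_natCast]
    push_cast
    rfl
  have hcpow : (p : ℂ) ^ (-((s : ℂ) + k)) = ((p : ℂ) ^ (s + k))⁻¹ := by
    rw [Complex.cpow_neg, ← Nat.cast_add, Complex.cpow_natCast]
  rw [cohenRamanujanJordanTerm, cohenRamanujanSum_prime hs hp, moebius_apply_prime hp, hJ, hcpow]
  have : (p : ℂ) ^ (s + k) - 1 ≠ 0 := sub_ne_zero.2 hp1
  split_ifs <;> field_simp <;> ring

end

/-- For all positive integers `s, k, n`, the series
`∑_{q ≥ 1} μ(q) c_q^s(n^s) / J_{s+k}(q)` converges to `ζ(s+k) · J_k(n)/n^k`. -/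
theorem cohenRamanujan_expansion_jordan (s k n : ℕ) (hs : 0 < s) (hk : 0 < k) (hn : 0 < n) :
    Filter.Tendsto
      (fun N : ℕ => ∑ q ∈ Finset.Icc 1 N,
        (ArithmeticFunction.moebius q : ℂ) * cohenRamanujanSum s q (n ^ s) /
          ((jordanTotient ((s : ℝ) + (k : ℝ)) q : ℝ) : ℂ))
      Filter.atTop
      (nhds (riemannZeta ((s : ℂ) + (k : ℂ)) *
        ((jordanTotient (k : ℝ) n / (n : ℝ) ^ (k : ℝ) : ℝ) : ℂ))) := by
  have hsum := summable_norm_cohenRamanujanJordanTerm hs.ne' hk.ne' hn.ne'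
  have hprod := hasProd_one_add_of_apply_prime_pow_eq_zero
    (cohenRamanujanJordanTerm_one hs.ne' hn.ne') (cohenRamanujanJordanTerm_mul hs.ne' hn.ne') hsum
    cohenRamanujanJordanTerm_zero cohenRamanujanJordanTerm_prime_pow
  have hre : 1 < ((s : ℂ) + k).re := by
    simp only [Complex.add_re, Complex.natCast_re]
    norm_cast
    omega
  have heuler := ((riemannZeta_eulerProduct_hasProd hre).mul
    (hasProd_primes_ite_dvd hn.ne' fun p => 1 - 1 / (p : ℂ) ^ k)).congr_fun
    fun p => one_add_cohenRamanujanJordanTerm_prime hs.ne' p.prop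
  have htsum := hprod.unique heuler
  rw [jordanTotient_div_rpow_self _ hn.ne']
  push_cast
  simp only [Complex.ofReal_cpow (Nat.cast_nonneg _), Complex.ofReal_natCast, Complex.cpow_natCast]
  exact (htsum ▸ hsum.of_norm.hasSum).tendsto_sum_Icc_one cohenRamanujanJordanTerm_zero
end

section
/- Let p be a prime and r, s, n positive integers. Then c_{p^r}^s(n) = p^{sr} - p^{s(r-1)} if p^{sr} | n; c_{p^r}^s(n) = -p^{s(r-1)} if p^{s(r-1)} | n but p^{sr} ∤ n; and c_{p^r}^s(n) = 0 if p^{s(r-1)} ∤ n. -/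
open Finset Filter

/-! For `1 ≤ h ≤ p^{rs}`, `(h, p^{rs})_s = 1` exactly when `p^s ∤ h`. Hence `c_{p^r}^s(n)` is
the complete sum of `e^{2πinh/p^{rs}}` over `1 ≤ h ≤ p^{rs}` minus its part over the multiples
`h = p^s k`, which is the complete sum of `e^{2πink/p^{s(r-1)}}` over `1 ≤ k ≤ p^{s(r-1)}`. A
complete sum of `e^{2πinh/M}` over `1 ≤ h ≤ M` is `M` if `M ∣ n` and `0` otherwise. -/

open Complex
open scoped Real

theorem sum_Icc_pow_eq_mul_geom_sum {R : Type*} [CommSemiring R] (z : R) (M : ℕ) :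
    ∑ h ∈ Icc 1 M, z ^ h = z * ∑ i ∈ range M, z ^ i := by
  rw [mul_sum, range_eq_Ico, ← Ico_add_one_right_eq_Icc, ← zero_add 1, ← sum_Ico_add']
  simp only [pow_succ']

theorem sum_Icc_exp_two_pi_mul_I_mul_div {M : ℕ} (hM : M ≠ 0) (n : ℕ) :
    ∑ h ∈ Icc 1 M, exp (2 * π * I * n * h / M) = if M ∣ n then (M : ℂ) else 0 := by
  set z := exp (2 * π * I * n / M)
  have exp_eq_pow (h : ℕ) : exp (2 * π * I * n * h / M) = z ^ h := by
    rw [← exp_nat_mul]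
    ring_nf
  have hz_pow : z ^ M = 1 := by
    have := (exp_two_pi_mul_I_mul_div_eq_one_iff hM).2 (dvd_mul_left M n)
    rwa [Nat.cast_mul, ← mul_assoc, exp_eq_pow] at this
  simp only [exp_eq_pow]
  split_ifs with hdvd
  · have hz : z = 1 := (exp_two_pi_mul_I_mul_div_eq_one_iff hM).2 hdvd
    simp [hz]
  · have hz : z ≠ 1 := fun h => hdvd ((exp_two_pi_mul_I_mul_div_eq_one_iff hM).1 h)
    rw [sum_Icc_pow_eq_mul_geom_sum, geom_sum_eq hz, hz_pow, sub_self, zero_div, mul_zero]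

theorem genGcd_eq_one_iff {s m n : ℕ} (hs : s ≠ 0) (hn : n ≠ 0) :
    genGcd s m n = 1 ↔ ∀ l, l ^ s ∣ m → l ^ s ∣ n → l = 1 := by
  -- the same instance as in `genGcd`, so that membership proofs match its `filter`
  let := Classical.dec
  have hgcd : m.gcd n ≠ 0 := Nat.gcd_ne_zero_right hn
  have mem_of_dvd {l : ℕ} (hlm : l ^ s ∣ m) (hln : l ^ s ∣ n) :
      l ^ s ∈ (m.gcd n).divisors.filter fun d => ∃ l : ℕ, l ^ s = d :=
    mem_filter.2 ⟨Nat.mem_divisors.2 ⟨Nat.dvd_gcd hlm hln, hgcd⟩, l, rfl⟩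
  unfold genGcd
  constructor
  · intro h l hlm hln
    have hle : l ^ s ≤ 1 := h ▸ le_sup (f := id) (mem_of_dvd hlm hln)
    have hpos : 0 < l ^ s := Nat.pos_of_dvd_of_pos hln (Nat.pos_of_ne_zero hn)
    exact (Nat.pow_eq_one.1 (hle.antisymm hpos)).resolve_right hs
  · intro h
    refine le_antisymm (Finset.sup_le fun d hd => ?_) ?_
    · obtain ⟨hd, l, rfl⟩ := mem_filter.1 hd
      have hdvd := (Nat.mem_divisors.1 hd).1
      rw [h l (hdvd.trans (Nat.gcd_dvd_left m n)) (hdvd.trans (Nat.gcd_dvd_right m n)), one_pow]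
      rfl
    · simpa using le_sup (f := id) (mem_of_dvd (l := 1) (by simp) (by simp))

theorem genGcd_pow_prime_pow_eq_one_iff {p r s h : ℕ} (hp : p.Prime) (hr : r ≠ 0) (hs : s ≠ 0) :
    genGcd s h ((p ^ r) ^ s) = 1 ↔ ¬ p ^ s ∣ h := by
  rw [genGcd_eq_one_iff hs (pow_ne_zero _ (pow_ne_zero _ hp.ne_zero))]
  constructor
  · intro H hdvd
    exact hp.one_lt.ne' (H p hdvd (pow_dvd_pow_of_dvd (dvd_pow_self p hr) s))
  · intro H l hlh hlp
    obtain ⟨j, -, rfl⟩ := (Nat.dvd_prime_pow hp).1 ((Nat.pow_dvd_pow_iff hs).1 hlp)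
    rcases j with _ | j
    · rfl
    · exact absurd ((pow_dvd_pow_of_dvd (dvd_pow_self p j.succ_ne_zero) s).trans hlh) H

theorem Nat.filter_dvd_Icc_one_mul {a b : ℕ} (ha : 0 < a) :
    {h ∈ Icc 1 (a * b) | a ∣ h} = (Icc 1 b).image (a * ·) := by
  ext h
  simp only [mem_filter, mem_Icc, mem_image]
  constructor
  · rintro ⟨⟨h1, h2⟩, k, rfl⟩
    exact ⟨k, ⟨Nat.pos_of_mul_pos_left h1, Nat.le_of_mul_le_mul_left h2 ha⟩, rfl⟩
  · rintro ⟨k, ⟨h1, h2⟩, rfl⟩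
    exact ⟨⟨Nat.mul_pos ha h1, Nat.mul_le_mul_left a h2⟩, dvd_mul_right a k⟩

theorem sum_Icc_filter_dvd_exp_two_pi_mul_I_mul_div {a b : ℕ} (ha : a ≠ 0) (hb : b ≠ 0) (n : ℕ) :
    ∑ h ∈ Icc 1 (a * b) with a ∣ h, exp (2 * π * I * n * h / (a * b : ℕ)) =
      if b ∣ n then (b : ℂ) else 0 := by
  rw [Nat.filter_dvd_Icc_one_mul (Nat.pos_of_ne_zero ha),
    sum_image (mul_right_injective₀ ha).injOn, ← sum_Icc_exp_two_pi_mul_I_mul_div hb]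
  refine sum_congr rfl fun k _ => ?_
  have ha' : (a : ℂ) ≠ 0 := Nat.cast_ne_zero.2 ha
  push_cast
  congr 1
  field_simp

theorem cohenRamanujanSum_prime_pow_eq_sub {p r s : ℕ} (hp : p.Prime) (hr : r ≠ 0) (hs : s ≠ 0)
    (n : ℕ) :
    cohenRamanujanSum s (p ^ r) n =
      (if p ^ (s * r) ∣ n then (p : ℂ) ^ (s * r) else 0) -
        (if p ^ (s * (r - 1)) ∣ n then (p : ℂ) ^ (s * (r - 1)) else 0) := by
  have hsplit : p ^ (s * r) = p ^ s * p ^ (s * (r - 1)) := by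
    rw [Nat.mul_sub_one, pow_mul_pow_sub p (Nat.le_mul_of_pos_right s (Nat.pos_of_ne_zero hr))]
  have hpow : (p ^ r) ^ s = p ^ (s * r) := by rw [← pow_mul, mul_comm]
  set e : ℕ → ℂ := fun h => exp (2 * π * I * n * h / (p ^ (s * r) : ℕ))
  have hsummand (h : ℕ) : (if genGcd s h ((p ^ r) ^ s) = 1 then e h else 0) =
      e h - if p ^ s ∣ h then e h else 0 := by
    simp only [genGcd_pow_prime_pow_eq_one_iff hp hr hs]
    split_ifs <;> simp
  calc cohenRamanujanSum s (p ^ r) n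
      = ∑ h ∈ Icc 1 (p ^ (s * r)), (if genGcd s h ((p ^ r) ^ s) = 1 then e h else 0) := by
        rw [cohenRamanujanSum, ← Nat.cast_pow, hpow]
    _ = ∑ h ∈ Icc 1 (p ^ (s * r)), e h - ∑ h ∈ Icc 1 (p ^ (s * r)) with p ^ s ∣ h, e h := by
        rw [sum_filter, ← sum_sub_distrib]
        exact sum_congr rfl fun h _ => hsummand h
    _ = _ := by
        have hp0 {k : ℕ} : p ^ k ≠ 0 := pow_ne_zero k hp.ne_zero
        simp only [e]
        rw [sum_Icc_exp_two_pi_mul_I_mul_div hp0, hsplit,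
          sum_Icc_filter_dvd_exp_two_pi_mul_I_mul_div hp0 hp0, ← hsplit, Nat.cast_pow, Nat.cast_pow]

theorem cohenRamanujanSum_prime_pow_general (p : ℕ) (hp : p.Prime) (r s n : ℕ)
    (hr : 0 < r) (hs : 0 < s) :
    (p ^ (s * r) ∣ n →
      cohenRamanujanSum s (p ^ r) n = (p : ℂ) ^ (s * r) - (p : ℂ) ^ (s * (r - 1))) ∧
    (p ^ (s * (r - 1)) ∣ n → ¬ p ^ (s * r) ∣ n →
      cohenRamanujanSum s (p ^ r) n = -(p : ℂ) ^ (s * (r - 1))) ∧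
    (¬ p ^ (s * (r - 1)) ∣ n →
      cohenRamanujanSum s (p ^ r) n = 0) := by
  rw [cohenRamanujanSum_prime_pow_eq_sub hp hr.ne' hs.ne' n]
  have hdvd : p ^ (s * (r - 1)) ∣ p ^ (s * r) := pow_dvd_pow p (Nat.mul_le_mul_left s (r.sub_le 1))
  refine ⟨fun h => ?_, fun h h' => ?_, fun h => ?_⟩
  · rw [if_pos h, if_pos (hdvd.trans h)]
  · rw [if_neg h', if_pos h, zero_sub]
  · rw [if_neg fun h' => h (hdvd.trans h'), if_neg h, sub_zero]

/-- Values of the Cohen–Ramanujan sum at prime powers: for a prime `p` and positive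
integers `r, s, n`, `c_{p^r}^s(n)` equals `p^{sr} - p^{s(r-1)}` if `p^{sr} ∣ n`,
equals `-p^{s(r-1)}` if `p^{s(r-1)} ∣ n` but `p^{sr} ∤ n`, and equals `0` if
`p^{s(r-1)} ∤ n`. -/
theorem cohenRamanujanSum_prime_pow (p : ℕ) (hp : p.Prime) (r s n : ℕ)
    (hr : 0 < r) (hs : 0 < s) (hn : 0 < n) :
    (p ^ (s * r) ∣ n →
      cohenRamanujanSum s (p ^ r) n = (p : ℂ) ^ (s * r) - (p : ℂ) ^ (s * (r - 1))) ∧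
    (p ^ (s * (r - 1)) ∣ n → ¬ p ^ (s * r) ∣ n →
      cohenRamanujanSum s (p ^ r) n = -(p : ℂ) ^ (s * (r - 1))) ∧
    (¬ p ^ (s * (r - 1)) ∣ n →
      cohenRamanujanSum s (p ^ r) n = 0) :=
  cohenRamanujanSum_prime_pow_general p hp r s n hr hs
end

section
/- Let s be a positive integer and let h = m^s k where m, k are positive integers and k is s-power free (no prime p satisfies p^s | k). Then for every positive integer r, c_r^s(h) = c_r^s(m^s). -/
open Finset Filter

/-! The `d ∣ r` with `d^s ∣ h` are exactly the divisors of `g = Nat.floorRoot s (gcd h r^s)`,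
the largest `g` with `g^s ∣ gcd h r^s`, and `(h, r^s)_s = g^s`. So `∑_{d ∣ g} μ(d) = [g = 1]`
turns the condition `(h, r^s)_s = 1` into the weight `∑_{d ∣ r, d^s ∣ h} μ(d)`. Exchanging the
sums and summing the roots of unity over the multiples of `d^s` gives
`c_r^s(n) = ∑_{d ∣ r} μ(d) [e^s ∣ n] e^s` with `e = r/d`. Hence `c_r^s(n)` depends only on which
`e^s` with `e ∣ r` divide `n`, and when `k` is `s`-power free, `e^s ∣ m^s k` forces `e ∣ m`. -/

open Finset
open scoped ArithmeticFunction.Moebius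

namespace Nat

lemma eq_one_of_pow_dvd_of_powerFree {s a k : ℕ} (hk : ∀ p : ℕ, p.Prime → ¬ p ^ s ∣ k)
    (h : a ^ s ∣ k) : a = 1 := by
  by_contra ha
  obtain ⟨p, hp, hpa⟩ := exists_prime_and_dvd ha
  exact hk p hp ((pow_dvd_pow_of_dvd hpa s).trans h)

lemma pow_dvd_pow_mul_iff_of_powerFree {s m k e : ℕ} (hs : s ≠ 0)
    (hk : ∀ p : ℕ, p.Prime → ¬ p ^ s ∣ k) : e ^ s ∣ m ^ s * k ↔ e ^ s ∣ m ^ s := by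
  refine ⟨fun h => ?_, fun h => h.mul_right k⟩
  rw [pow_dvd_pow_iff hs]
  obtain hem | hem := eq_zero_or_pos (gcd e m)
  · rw [(gcd_eq_zero_iff.mp hem).2]
    exact dvd_zero e
  obtain ⟨g, e', m', hg, hcop, rfl, rfl⟩ := exists_coprime' hem
  rw [mul_pow, mul_pow, mul_right_comm] at h
  have he' : e' ^ s ∣ k := (hcop.pow s s).dvd_of_dvd_mul_left
    (Nat.dvd_of_mul_dvd_mul_right (pow_pos hg s) h)
  rw [eq_one_of_pow_dvd_of_powerFree hk he', one_mul]
  exact dvd_mul_left g m'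

lemma dvd_floorRoot_gcd_pow_iff {s a r d : ℕ} (hs : s ≠ 0) :
    d ∣ floorRoot s (a.gcd (r ^ s)) ↔ d ∣ r ∧ d ^ s ∣ a := by
  rw [← pow_dvd_iff_dvd_floorRoot, dvd_gcd_iff, pow_dvd_pow_iff hs, and_comm]

lemma filter_dvd_Icc_mul_eq_image {D : ℕ} (hD : D ≠ 0) (E : ℕ) :
    {h ∈ Icc 1 (D * E) | D ∣ h} = (Icc 1 E).image (D * ·) := by
  ext h
  simp only [mem_filter, mem_Icc, mem_image]
  constructor
  · rintro ⟨⟨h1, hDE⟩, j, rfl⟩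
    exact ⟨j, ⟨Nat.pos_of_ne_zero (by rintro rfl; simp at h1),
      le_of_mul_le_mul_left hDE (pos_of_ne_zero hD)⟩, rfl⟩
  · rintro ⟨j, ⟨hj1, hjE⟩, rfl⟩
    exact ⟨⟨Nat.mul_pos (pos_of_ne_zero hD) hj1, Nat.mul_le_mul_left D hjE⟩, dvd_mul_right D j⟩

end Nat

lemma genGcd_eq_floorRoot_gcd_pow {s a b : ℕ} (hs : s ≠ 0) (hab : a.gcd b ≠ 0) :
    genGcd s a b = Nat.floorRoot s (a.gcd b) ^ s := by
  unfold genGcd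
  apply le_antisymm
  · refine Finset.sup_le fun d hd => ?_
    simp only [mem_filter] at hd
    obtain ⟨hd, l, rfl⟩ := hd
    have hl : l ∣ Nat.floorRoot s (a.gcd b) :=
      Nat.pow_dvd_iff_dvd_floorRoot.mp (Nat.dvd_of_mem_divisors hd)
    exact Nat.pow_le_pow_left (Nat.le_of_dvd (Nat.pos_of_ne_zero
      (Nat.floorRoot_ne_zero.mpr ⟨hs, hab⟩)) hl) s
  · refine Finset.le_sup (f := id) ?_
    simp only [mem_filter, Nat.mem_divisors]
    exact ⟨⟨Nat.floorRoot_pow_dvd, hab⟩, _, rfl⟩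

lemma genGcd_pow_eq_one_iff {s a r : ℕ} (hs : s ≠ 0) (hr : r ≠ 0) :
    genGcd s a (r ^ s) = 1 ↔ Nat.floorRoot s (a.gcd (r ^ s)) = 1 := by
  rw [genGcd_eq_floorRoot_gcd_pow hs (Nat.gcd_ne_zero_right (pow_ne_zero s hr)), Nat.pow_eq_one]
  simp [hs]

lemma sum_moebius_divisors (R : Type*) [Ring R] (n : ℕ) :
    ∑ d ∈ n.divisors, (μ d : R) = if n = 1 then 1 else 0 := by
  have := congrArg (· n) (ArithmeticFunction.coe_moebius_mul_coe_zeta (R := R))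
  simpa only [ArithmeticFunction.coe_mul_zeta_apply, ArithmeticFunction.one_apply,
    ArithmeticFunction.intCoe_apply] using this

lemma ite_genGcd_eq_one_eq_sum_moebius (R : Type*) [Ring R] {s a r : ℕ} (hs : s ≠ 0)
    (ha : a ≠ 0) (hr : r ≠ 0) :
    (if genGcd s a (r ^ s) = 1 then 1 else 0 : R) = ∑ d ∈ r.divisors with d ^ s ∣ a, (μ d : R) := by
  have hdiv : (Nat.floorRoot s (a.gcd (r ^ s))).divisors = {d ∈ r.divisors | d ^ s ∣ a} := by
    ext d
    simp [Nat.dvd_floorRoot_gcd_pow_iff hs, hs, ha, hr]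
  rw [← hdiv, sum_moebius_divisors]
  simp only [genGcd_pow_eq_one_iff hs hr]

namespace IsPrimitiveRoot

variable {R : Type*} [CommRing R] [IsDomain R] {ζ : R}

lemma sum_Icc_pow_mul {M : ℕ} (hζ : IsPrimitiveRoot ζ M) (n : ℕ) :
    ∑ j ∈ Icc 1 M, ζ ^ (n * j) = if M ∣ n then (M : R) else 0 := by
  simp only [pow_mul]
  split_ifs with hMn
  · simp [(hζ.pow_eq_one_iff_dvd n).mpr hMn]
  have hne : ζ ^ n - 1 ≠ 0 := sub_ne_zero.mpr (mt (hζ.pow_eq_one_iff_dvd n).mp hMn)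
  have hgeom : ∑ j ∈ range M, (ζ ^ n) ^ j = 0 := by
    refine (_root_.mul_eq_zero.mp ?_).resolve_right hne
    rw [geom_sum_mul, ← pow_mul, mul_comm, pow_mul, hζ.pow_eq_one, one_pow, sub_self]
  rw [← Ico_add_one_right_eq_Icc, sum_Ico_eq_sum_range, add_tsub_cancel_right]
  simp only [pow_add, ← mul_sum, hgeom, mul_zero]

lemma sum_Icc_filter_dvd_pow_mul {D E : ℕ} (hζ : IsPrimitiveRoot ζ (D * E)) (hD : D ≠ 0)
    (n : ℕ) : ∑ h ∈ Icc 1 (D * E) with D ∣ h, ζ ^ (n * h) = if E ∣ n then (E : R) else 0 := by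
  have hζD : IsPrimitiveRoot (ζ ^ D) E := by
    simpa [hD] using hζ.pow_of_dvd hD (dvd_mul_right D E)
  rw [Nat.filter_dvd_Icc_mul_eq_image hD,
    sum_image fun _ _ _ _ => Nat.eq_of_mul_eq_mul_left (pos_of_ne_zero hD),
    ← hζD.sum_Icc_pow_mul n]
  refine sum_congr rfl fun j _ => ?_
  ring

end IsPrimitiveRoot

lemma exp_two_pi_I_mul_mul_div_eq_pow (N : ℂ) (n h : ℕ) :
    Complex.exp (2 * Real.pi * Complex.I * n * h / N) =
      Complex.exp (2 * Real.pi * Complex.I / N) ^ (n * h) := by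
  rw [← Complex.exp_nat_mul]
  push_cast
  ring_nf

theorem cohenRamanujanSum_eq_sum_divisors {s r : ℕ} (hs : s ≠ 0) (hr : r ≠ 0) (n : ℕ) :
    cohenRamanujanSum s r n =
      ∑ d ∈ r.divisors, (μ d : ℂ) * if (r / d) ^ s ∣ n then (((r / d) ^ s : ℕ) : ℂ) else 0 := by
  set ζ := Complex.exp (2 * Real.pi * Complex.I / (r : ℂ) ^ s)
  have hζ : IsPrimitiveRoot ζ (r ^ s) := by
    simpa using Complex.isPrimitiveRoot_exp (r ^ s) (pow_ne_zero s hr)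
  have hterm : ∀ h ∈ Icc 1 (r ^ s),
      (if genGcd s h (r ^ s) = 1 then
        Complex.exp (2 * Real.pi * Complex.I * n * h / (r ^ s)) else 0) =
      ∑ d ∈ r.divisors with d ^ s ∣ h, (μ d : ℂ) * ζ ^ (n * h) := by
    intro h hh
    have hh0 : h ≠ 0 := Nat.one_le_iff_ne_zero.mp (mem_Icc.mp hh).1
    rw [← sum_mul, ← ite_genGcd_eq_one_eq_sum_moebius ℂ hs hh0 hr, ite_zero_mul, one_mul,
      exp_two_pi_I_mul_mul_div_eq_pow]
  unfold cohenRamanujanSum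
  rw [sum_congr rfl hterm,
    sum_comm' (t' := r.divisors) (s' := fun d => {h ∈ Icc 1 (r ^ s) | d ^ s ∣ h})]
  · refine sum_congr rfl fun d hd => ?_
    have hrd : d ^ s * (r / d) ^ s = r ^ s := by
      rw [← mul_pow, Nat.mul_div_cancel' (Nat.dvd_of_mem_divisors hd)]
    rw [← hrd] at hζ
    rw [← mul_sum, ← hrd,
      hζ.sum_Icc_filter_dvd_pow_mul (pow_ne_zero s (Nat.pos_of_mem_divisors hd).ne')]
  · intro h d
    simp only [mem_filter]
    tauto

theorem cohenRamanujanSum_spowerfree_general (s m k : ℕ) (hs : 0 < s)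
    (hkfree : ∀ p : ℕ, p.Prime → ¬ p ^ s ∣ k) (r : ℕ) (hr : 0 < r) :
    cohenRamanujanSum s r (m ^ s * k) = cohenRamanujanSum s r (m ^ s) := by
  simp only [cohenRamanujanSum_eq_sum_divisors hs.ne' hr.ne',
    Nat.pow_dvd_pow_mul_iff_of_powerFree hs.ne' hkfree]

/-- If `h = m^s * k` with `k` an `s`-power free positive integer, then
`c_r^s(h) = c_r^s(m^s)` for every positive integer `r`. -/
theorem cohenRamanujanSum_spowerfree (s m k : ℕ) (hs : 0 < s) (hm : 0 < m) (hk : 0 < k)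
    (hkfree : ∀ p : ℕ, p.Prime → ¬ p ^ s ∣ k) (r : ℕ) (hr : 0 < r) :
    cohenRamanujanSum s r (m ^ s * k) = cohenRamanujanSum s r (m ^ s) :=
  cohenRamanujanSum_spowerfree_general s m k hs hkfree r hr
end
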